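/- Let f̂_R = χ_{[R,R+1]} and t₀ = cR^{−1/α} with 0 < α < 1/2 and c small. For every x with |x| < c and R large, |∫_{[R,R+1]} e^{ixξ}(i t₀^α ξ + i t₀ ξ²) dξ| ≥ c^α/2, while |Σ_{j≥2} (1/j!) ∫_{[R,R+1]} e^{ixξ}(i t₀^α ξ + i t₀ ξ²)^j dξ| ≤ Σ_{j≥2} (2c^α)^j/j! ≤ c^α/4; hence |U_γ f_R(x,t₀) − f_R(x)| ≥ c^α/(8π), where γ(x,t) = x + t^α. -/

import Mathlib

open MeasureTheory Real Set

/-- `U_γ` for the curve `γ(x,t) = x + t^α`, on the Fourier side. -/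
noncomputable def Uplus (α : ℝ) (fhat : ℝ → ℂ) (x t : ℝ) : ℂ :=
  (1 / (2 * π)) * ∫ η : ℝ, Complex.exp (Complex.I * (((x + t ^ α) * η + t * η ^ 2 : ℝ) : ℂ)) * fhat η

/-- The inverse Fourier transform `f(x) = (1/(2π)) ∫ e^{ixη} f̂(η) dη`. -/
noncomputable def invF (fhat : ℝ → ℂ) (x : ℝ) : ℂ :=
  (1 / (2 * π)) * ∫ η : ℝ, Complex.exp (Complex.I * ((x * η : ℝ) : ℂ)) * fhat η

/-- `t₀ = c R^{−1/α}`. -/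
noncomputable def tzero (c R α : ℝ) : ℝ := c * R ^ (-(1/α))

/-- `θ(ξ) = t₀^α ξ + t₀ ξ²`. -/
noncomputable def theta (c R α ξ : ℝ) : ℝ :=
  (tzero c R α) ^ α * ξ + tzero c R α * ξ ^ 2

lemma expTail_hasSum (z : ℂ) :
    HasSum (fun j : ℕ => z ^ (j+2) / ((j+2).factorial : ℂ)) (Complex.exp z - 1 - z) := by
  have hs : HasSum (fun n : ℕ => z ^ n / (n.factorial : ℂ)) (Complex.exp z) := by
    have h1 := NormedSpace.expSeries_div_summable z
    have h2 : NormedSpace.exp z = ∑' n : ℕ, z ^ n / (n.factorial : ℂ) :=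
      congrFun NormedSpace.exp_eq_tsum_div z
    rw [Complex.exp_eq_exp_ℂ, h2]
    exact h1.hasSum
  have h := (hasSum_nat_add_iff' (f := fun n : ℕ => z ^ n / (n.factorial : ℂ)) 2).2 hs
  simpa [Finset.sum_range_succ, sub_sub] using h


lemma first_term_bound (R x m : ℝ) (θ : ℝ → ℝ) (hθc : Continuous θ)
    (hm : 0 ≤ m) (hlb : ∀ ξ ∈ Icc R (R+1), m ≤ θ ξ) (hx : |x| ≤ 1) :
    m / 2 ≤ ‖∫ ξ in Icc R (R+1),
        Complex.exp (Complex.I * ((x * ξ : ℝ) : ℂ)) * (Complex.I * ((θ ξ : ℝ) : ℂ))‖ := by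
  set g : ℝ → ℂ := fun ξ => Complex.exp (((x*(ξ-R) : ℝ) : ℂ) * Complex.I) * ((θ ξ : ℝ) : ℂ)
    with hg
  have hgc : Continuous g := by
    apply Continuous.mul
    · exact Complex.continuous_exp.comp (by continuity)
    · exact Complex.continuous_ofReal.comp hθc
  have hrw : ∀ ξ : ℝ, Complex.exp (Complex.I * ((x * ξ : ℝ) : ℂ)) * (Complex.I * ((θ ξ : ℝ) : ℂ))
      = (Complex.I * Complex.exp (Complex.I * ((x * R : ℝ) : ℂ))) * g ξ := by
    intro ξ
    rw [hg, show Complex.I * ((x * ξ : ℝ) : ℂ)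
        = Complex.I * ((x * R : ℝ) : ℂ) + ((x*(ξ-R) : ℝ) : ℂ) * Complex.I by push_cast; ring,
      Complex.exp_add]
    ring
  have hIeq : (∫ ξ in Icc R (R+1),
      Complex.exp (Complex.I * ((x * ξ : ℝ) : ℂ)) * (Complex.I * ((θ ξ : ℝ) : ℂ)))
      = (Complex.I * Complex.exp (Complex.I * ((x * R : ℝ) : ℂ))) * ∫ ξ in Icc R (R+1), g ξ := by
    rw [← integral_const_mul]
    exact setIntegral_congr_fun measurableSet_Icc fun ξ _ => hrw ξ
  rw [hIeq, norm_mul]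
  have h1 : ‖Complex.I * Complex.exp (Complex.I * ((x * R : ℝ) : ℂ))‖ = 1 := by
    rw [norm_mul, Complex.norm_I, one_mul, mul_comm, Complex.norm_exp_ofReal_mul_I]
  rw [h1, one_mul]
  have hint : IntegrableOn g (Icc R (R+1)) := hgc.integrableOn_Icc
  have hre : (∫ ξ in Icc R (R+1), g ξ).re
      = ∫ ξ in Icc R (R+1), Real.cos (x*(ξ-R)) * θ ξ := by
    rw [show (∫ ξ in Icc R (R+1), g ξ).re
        = Complex.reCLM (∫ ξ in Icc R (R+1), g ξ) from rfl,
      ← ContinuousLinearMap.integral_comp_comm _ hint]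
    refine setIntegral_congr_fun measurableSet_Icc fun ξ _ => ?_
    simp only [hg, Complex.reCLM_apply, Complex.mul_re, Complex.ofReal_re, Complex.ofReal_im,
      mul_zero, sub_zero, Complex.exp_ofReal_mul_I_re]
  have hmono : m / 2 ≤ ∫ ξ in Icc R (R+1), Real.cos (x*(ξ-R)) * θ ξ := by
    have hconst : (∫ _ξ in Icc R (R+1), (m/2 : ℝ)) = m/2 := by
      simp [Real.volume_Icc]
    rw [← hconst]
    refine setIntegral_mono_on (integrableOn_const ?_)
      (((Real.continuous_cos.comp (by continuity)).mul hθc).integrableOn_Icc)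
      measurableSet_Icc ?_
    · rw [Real.volume_Icc]; exact ENNReal.ofReal_ne_top
    · intro ξ hξ
      obtain ⟨hξ1, hξ2⟩ := hξ
      have hθ := hlb ξ ⟨hξ1, hξ2⟩
      have habs : |x*(ξ-R)| ≤ 1 := by
        rw [abs_mul]
        have h01 : |ξ - R| ≤ 1 := by rw [abs_of_nonneg (by linarith)]; linarith
        calc |x| * |ξ-R| ≤ 1 * 1 := by
              exact mul_le_mul hx h01 (abs_nonneg _) zero_le_one
          _ = 1 := by norm_num
      have hcos : (1:ℝ)/2 ≤ Real.cos (x*(ξ-R)) := by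
        have := Real.one_sub_sq_div_two_le_cos (x := x*(ξ-R))
        have hsq : (x*(ξ-R))^2 ≤ 1 := by
          nlinarith [sq_abs (x*(ξ-R)), habs, abs_nonneg (x*(ξ-R))]
        linarith
      nlinarith [hθ, hcos, hm]
  calc m/2 ≤ (∫ ξ in Icc R (R+1), g ξ).re := by rw [hre]; exact hmono
    _ ≤ ‖∫ ξ in Icc R (R+1), g ξ‖ := Complex.re_le_norm _


lemma tail_bound (R x q : ℝ) (θ : ℝ → ℝ) (hθc : Continuous θ)
    (hq0 : 0 ≤ q) (hq : q ≤ 1/2) (hub : ∀ ξ ∈ Icc R (R+1), |θ ξ| ≤ q) :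
    ‖∑' j : ℕ, (1 / (((j+2).factorial : ℕ) : ℂ)) *
        ∫ ξ in Icc R (R+1), Complex.exp (Complex.I * ((x * ξ : ℝ) : ℂ)) *
          (Complex.I * ((θ ξ : ℝ) : ℂ)) ^ (j+2)‖ ≤ q ^ 2 := by
  have hterm : ∀ j : ℕ, ‖(1 / (((j+2).factorial : ℕ) : ℂ)) *
      ∫ ξ in Icc R (R+1), Complex.exp (Complex.I * ((x * ξ : ℝ) : ℂ)) *
        (Complex.I * ((θ ξ : ℝ) : ℂ)) ^ (j+2)‖ ≤ q ^ (j+2) / 2 := by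
    intro j
    rw [norm_mul]
    have hc : ‖(1 / (((j+2).factorial : ℕ) : ℂ))‖ = 1 / ((j+2).factorial : ℝ) := by
      simp
    have hI : ‖∫ ξ in Icc R (R+1), Complex.exp (Complex.I * ((x * ξ : ℝ) : ℂ)) *
        (Complex.I * ((θ ξ : ℝ) : ℂ)) ^ (j+2)‖ ≤ q ^ (j+2) * 1 := by
      have hmeas : AEStronglyMeasurable (fun ξ : ℝ => Complex.exp (Complex.I * ((x * ξ : ℝ) : ℂ)) *
          (Complex.I * ((θ ξ : ℝ) : ℂ)) ^ (j+2)) (volume.restrict (Icc R (R+1))) := by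
        apply Continuous.aestronglyMeasurable
        apply Continuous.mul
        · exact Complex.continuous_exp.comp (by continuity)
        · exact (continuous_const.mul (Complex.continuous_ofReal.comp hθc)).pow _
      have hb : ∀ ξ ∈ Icc R (R+1), ‖Complex.exp (Complex.I * ((x * ξ : ℝ) : ℂ)) *
          (Complex.I * ((θ ξ : ℝ) : ℂ)) ^ (j+2)‖ ≤ q ^ (j+2) := by
        intro ξ hξ
        rw [norm_mul, norm_pow]
        have h1 : ‖Complex.exp (Complex.I * ((x * ξ : ℝ) : ℂ))‖ = 1 := by
          rw [mul_comm, Complex.norm_exp_ofReal_mul_I]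
        have h2 : ‖Complex.I * ((θ ξ : ℝ) : ℂ)‖ = |θ ξ| := by
          rw [norm_mul, Complex.norm_I, one_mul, Complex.norm_real, Real.norm_eq_abs]
        rw [h1, h2, one_mul]
        exact pow_le_pow_left₀ (abs_nonneg _) (hub ξ hξ) _
      have := norm_setIntegral_le_of_norm_le_const (μ := volume) (s := Icc R (R+1))
        (C := q ^ (j+2)) (by rw [Real.volume_Icc]; exact ENNReal.ofReal_lt_top) hb
      calc ‖_‖ ≤ q^(j+2) * (volume (Icc R (R+1))).toReal := this
        _ = q^(j+2) * 1 := by rw [Real.volume_Icc]; norm_num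
    have hfac : (2 : ℝ) ≤ ((j+2).factorial : ℝ) := by
      exact_mod_cast Nat.self_le_factorial (j+2) |>.trans' (by omega)
    calc ‖(1 / (((j+2).factorial : ℕ) : ℂ))‖ * ‖_‖
        ≤ (1 / ((j+2).factorial : ℝ)) * (q ^ (j+2) * 1) := by
          rw [hc]
          exact mul_le_mul_of_nonneg_left hI (by positivity)
      _ ≤ q ^ (j+2) / 2 := by
          rw [mul_one]
          have h12 : 1 / ((j+2).factorial : ℝ) ≤ 1/2 :=
            one_div_le_one_div_of_le (by norm_num) hfac
          calc (1 / ((j+2).factorial : ℝ)) * q ^ (j+2) ≤ (1/2) * q ^ (j+2) :=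
                mul_le_mul_of_nonneg_right h12 (by positivity)
            _ = q ^ (j+2) / 2 := by ring
  have hgs : HasSum (fun j : ℕ => q ^ (j+2) / 2) (q^2/2 * (1-q)⁻¹) := by
    have h := (hasSum_geometric_of_lt_one hq0 (by linarith)).mul_left (q^2/2)
    have he : (fun j : ℕ => q^2/2 * q^j) = fun j : ℕ => q ^ (j+2) / 2 := by
      funext j; ring
    rwa [he] at h
  refine le_trans (tsum_of_norm_bounded hgs hterm) ?_
  have hinv : (1-q)⁻¹ ≤ 2 := by
    rw [inv_le_comm₀ (by linarith) (by norm_num)]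
    linarith
  nlinarith [sq_nonneg q]

/-- With `f̂_R = χ_{[R,R+1]}` and `t₀ = cR^{−1/α}` (`0 < α < 1/2`, `c` small): for `|x| < c`
and `R` large, the first-order Taylor term satisfies
`|∫_{[R,R+1]} e^{ixξ}(i t₀^α ξ + i t₀ ξ²) dξ| ≥ c^α/2`, the tail satisfies
`|Σ_{j≥2} (1/j!) ∫_{[R,R+1]} e^{ixξ}(i t₀^α ξ + i t₀ ξ²)^j dξ| ≤ c^α/4`, and hence
`|U_γ f_R(x,t₀) − f_R(x)| ≥ c^α/(8π)` for `γ(x,t) = x + t^α`. -/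
theorem taylor_lower_bound_counterexample
    (α : ℝ) (hα : 0 < α) (hα2 : α < 1/2) :
    ∃ c₀ > (0:ℝ), ∀ c : ℝ, 0 < c → c ≤ c₀ → ∃ R₀ : ℝ, ∀ R : ℝ, R₀ ≤ R →
      ∀ x : ℝ, |x| < c →
        c ^ α / 2 ≤
          ‖∫ ξ in Icc R (R+1),
            Complex.exp (Complex.I * ((x * ξ : ℝ) : ℂ)) * (Complex.I * ((theta c R α ξ : ℝ) : ℂ))‖
        ∧ ‖∑' j : ℕ, (1 / ((j+2).factorial : ℂ)) *
              ∫ ξ in Icc R (R+1),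
                Complex.exp (Complex.I * ((x * ξ : ℝ) : ℂ)) *
                  (Complex.I * ((theta c R α ξ : ℝ) : ℂ)) ^ (j+2)‖ ≤ c ^ α / 4
        ∧ c ^ α / (8 * π) ≤
            ‖Uplus α (Set.indicator (Icc R (R+1)) fun _ => (1:ℂ)) x (tzero c R α) -
              invF (Set.indicator (Icc R (R+1)) fun _ => (1:ℂ)) x‖ := by
  refine ⟨(1/16:ℝ) ^ (1/α), Real.rpow_pos_of_pos (by norm_num) _, ?_⟩
  intro c hc0 hcc0
  have hcα_pos : 0 < c ^ α := Real.rpow_pos_of_pos hc0 _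
  have hc16 : c ^ α ≤ 1/16 := by
    calc c ^ α ≤ ((1/16:ℝ) ^ (1/α)) ^ α := Real.rpow_le_rpow hc0.le hcc0 hα.le
      _ = (1/16:ℝ) ^ ((1/α) * α) := by rw [← Real.rpow_mul (by norm_num)]
      _ = 1/16 := by
          rw [show (1/α) * α = 1 by field_simp, Real.rpow_one]
  have hc1 : c ≤ 1 := by
    by_contra h
    push_neg at h
    have : (1:ℝ) < c ^ α := (Real.one_lt_rpow_iff_of_pos hc0).2 (Or.inl ⟨h, hα⟩)
    linarith
  have hccα : c ≤ c ^ α := by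
    have := Real.rpow_le_rpow_of_exponent_ge hc0 hc1 (by linarith : α ≤ (1:ℝ))
    rwa [Real.rpow_one] at this
  have hβ : 0 < 1/α - 2 := by
    have h2 : 2 < 1/α := by
      rw [lt_one_div (by norm_num) hα]; linarith
    linarith
  refine ⟨max 2 ((8:ℝ) ^ (1/(1/α - 2))), ?_⟩
  intro R hR x hx
  have hR2 : (2:ℝ) ≤ R := le_trans (le_max_left _ _) hR
  have hR0 : 0 < R := by linarith
  have hR8 : (8:ℝ) ≤ R ^ (1/α - 2) := by
    have h8 : (8:ℝ) ^ (1/(1/α - 2)) ≤ R := le_trans (le_max_right _ _) hR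
    calc (8:ℝ) = ((8:ℝ) ^ (1/(1/α - 2))) ^ (1/α - 2) := by
          rw [← Real.rpow_mul (by norm_num), show (1/(1/α-2)) * (1/α-2) = 1 by rw [one_div, inv_mul_cancel₀ hβ.ne'], Real.rpow_one]
      _ ≤ R ^ (1/α - 2) := Real.rpow_le_rpow (Real.rpow_nonneg (by norm_num) _) h8 hβ.le
  have ht0 : 0 < tzero c R α := mul_pos hc0 (Real.rpow_pos_of_pos hR0 _)
  have htα : (tzero c R α) ^ α = c ^ α * R⁻¹ := by
    rw [tzero, Real.mul_rpow hc0.le (Real.rpow_pos_of_pos hR0 _).le,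
      ← Real.rpow_mul hR0.le]
    congr 1
    rw [show -(1/α) * α = -1 by field_simp, Real.rpow_neg_one]
  -- bound on the quadratic term
  have hquad : ∀ ξ ∈ Icc R (R+1), tzero c R α * ξ ^ 2 ≤ c ^ α / 2 := by
    intro ξ hξ
    obtain ⟨hξ1, hξ2⟩ := hξ
    have hξ0 : 0 < ξ := lt_of_lt_of_le hR0 hξ1
    have h2R : ξ ^ 2 ≤ 4 * R ^ 2 := by nlinarith
    have hkey : R ^ (-(1/α)) * (4 * R ^ 2) ≤ 1/2 := by
      have e1 : R ^ (-(1/α)) * R ^ 2 = (R ^ (1/α - 2))⁻¹ := by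
        rw [← Real.rpow_natCast R 2, ← Real.rpow_add hR0, ← Real.rpow_neg hR0.le]
        congr 1; push_cast; ring
      have e2 : (R ^ (1/α - 2))⁻¹ ≤ 8⁻¹ := by
        apply inv_anti₀ (by norm_num) hR8
      calc R ^ (-(1/α)) * (4 * R ^ 2) = 4 * (R ^ (-(1/α)) * R ^ 2) := by ring
        _ = 4 * (R ^ (1/α - 2))⁻¹ := by rw [e1]
        _ ≤ 4 * 8⁻¹ := by linarith
        _ = 1/2 := by norm_num
    have hrp : (0:ℝ) < R ^ (-(1/α)) := Real.rpow_pos_of_pos hR0 _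
    calc tzero c R α * ξ ^ 2 = c * (R ^ (-(1/α)) * ξ ^ 2) := by rw [tzero]; ring
      _ ≤ c * (R ^ (-(1/α)) * (4 * R ^ 2)) := by
          apply mul_le_mul_of_nonneg_left _ hc0.le
          exact mul_le_mul_of_nonneg_left h2R hrp.le
      _ ≤ c * (1/2) := mul_le_mul_of_nonneg_left hkey hc0.le
      _ ≤ c ^ α / 2 := by linarith
  have hRinv : R⁻¹ * R = 1 := inv_mul_cancel₀ hR0.ne'
  have hRinv2 : R⁻¹ ≤ 1/2 := by
    rw [inv_le_comm₀ hR0 (by norm_num)] <;> linarith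
  have hlb : ∀ ξ ∈ Icc R (R+1), c ^ α ≤ theta c R α ξ := by
    intro ξ hξ
    obtain ⟨hξ1, hξ2⟩ := hξ
    rw [theta, htα]
    have h1 : c ^ α * R⁻¹ * R ≤ c ^ α * R⁻¹ * ξ := by
      apply mul_le_mul_of_nonneg_left hξ1
      positivity
    have h2 : c ^ α * R⁻¹ * R = c ^ α := by rw [mul_assoc, hRinv, mul_one]
    nlinarith [sq_nonneg ξ, ht0]
  have hub : ∀ ξ ∈ Icc R (R+1), theta c R α ξ ≤ 2 * c ^ α := by
    intro ξ hξ
    obtain ⟨hξ1, hξ2⟩ := hξ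
    have hq := hquad ξ ⟨hξ1, hξ2⟩
    rw [theta, htα]
    have h1 : c ^ α * R⁻¹ * ξ ≤ c ^ α * R⁻¹ * (R+1) := by
      apply mul_le_mul_of_nonneg_left hξ2
      positivity
    have h2 : c ^ α * R⁻¹ * (R+1) = c ^ α + c ^ α * R⁻¹ := by
      rw [mul_add, mul_assoc, hRinv]; ring
    have h3 : c ^ α * R⁻¹ ≤ c ^ α * (1/2) :=
      mul_le_mul_of_nonneg_left hRinv2 hcα_pos.le
    nlinarith
  have hθc : Continuous (theta c R α) := by
    unfold theta; fun_prop
  have hx1 : |x| ≤ 1 := le_trans hx.le (le_trans hcc0 (by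
    have : ((1:ℝ)/16) ^ (1/α) ≤ 1 := Real.rpow_le_one (by norm_num) (by norm_num) (by positivity)
    linarith))
  -- Part 1
  have part1 : c ^ α / 2 ≤ ‖∫ ξ in Icc R (R+1),
      Complex.exp (Complex.I * ((x * ξ : ℝ) : ℂ)) * (Complex.I * ((theta c R α ξ : ℝ) : ℂ))‖ :=
    first_term_bound R x (c ^ α) (theta c R α) hθc hcα_pos.le hlb hx1
  -- Part 2
  have habs : ∀ ξ ∈ Icc R (R+1), |theta c R α ξ| ≤ 2 * c ^ α := by
    intro ξ hξ
    rw [abs_of_nonneg (le_trans hcα_pos.le (hlb ξ hξ))]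
    exact hub ξ hξ
  have part2 : ‖∑' j : ℕ, (1 / ((j+2).factorial : ℂ)) *
      ∫ ξ in Icc R (R+1), Complex.exp (Complex.I * ((x * ξ : ℝ) : ℂ)) *
        (Complex.I * ((theta c R α ξ : ℝ) : ℂ)) ^ (j+2)‖ ≤ c ^ α / 4 := by
    have h := tail_bound R x (2 * c ^ α) (theta c R α) hθc (by positivity)
      (by linarith) habs
    calc ‖_‖ ≤ (2 * c ^ α) ^ 2 := h
      _ ≤ c ^ α / 4 := by nlinarith
  refine ⟨part1, part2, ?_⟩
  -- Part 3
  have hindcalc : ∀ E : ℝ → ℂ, (∫ η : ℝ, E η * Set.indicator (Icc R (R+1)) (fun _ => (1:ℂ)) η)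
      = ∫ η in Icc R (R+1), E η := by
    intro E
    rw [← integral_indicator measurableSet_Icc]
    congr 1
    funext η
    by_cases hη : η ∈ Icc R (R+1) <;> simp [hη]
  have hEcont : Continuous fun η : ℝ => Complex.exp (Complex.I * ((x * η : ℝ) : ℂ)) := by
    fun_prop
  have hΦcont : Continuous fun η : ℝ => Complex.exp (Complex.I *
      (((x + (tzero c R α) ^ α) * η + (tzero c R α) * η ^ 2 : ℝ) : ℂ)) := by fun_prop
  have hexpzcont : Continuous fun η : ℝ =>
      Complex.exp (Complex.I * ((theta c R α η : ℝ) : ℂ)) := by fun_prop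
  have hΦeq : ∀ η : ℝ, Complex.exp (Complex.I *
        (((x + (tzero c R α) ^ α) * η + (tzero c R α) * η ^ 2 : ℝ) : ℂ))
      = Complex.exp (Complex.I * ((x * η : ℝ) : ℂ)) *
          Complex.exp (Complex.I * ((theta c R α η : ℝ) : ℂ)) := by
    intro η
    rw [← Complex.exp_add]
    congr 1
    rw [theta]
    push_cast
    ring
  have hsplit : Uplus α (Set.indicator (Icc R (R+1)) fun _ => (1:ℂ)) x (tzero c R α) -
        invF (Set.indicator (Icc R (R+1)) fun _ => (1:ℂ)) x
      = (1 / (2 * (π:ℂ))) * ∫ η in Icc R (R+1),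
          Complex.exp (Complex.I * ((x * η : ℝ) : ℂ)) *
            (Complex.exp (Complex.I * ((theta c R α η : ℝ) : ℂ)) - 1) := by
    rw [Uplus, invF, hindcalc, hindcalc, ← mul_sub]
    congr 1
    rw [← integral_sub hΦcont.integrableOn_Icc hEcont.integrableOn_Icc]
    refine setIntegral_congr_fun measurableSet_Icc fun η _ => ?_
    rw [hΦeq η]
    ring
  -- the series decomposition
  have hpt : ∀ η : ℝ, HasSum
      (fun j : ℕ => (1 / ((j+2).factorial : ℂ)) *
        (Complex.exp (Complex.I * ((x * η : ℝ) : ℂ)) *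
          (Complex.I * ((theta c R α η : ℝ) : ℂ)) ^ (j+2)))
      (Complex.exp (Complex.I * ((x * η : ℝ) : ℂ)) *
          (Complex.exp (Complex.I * ((theta c R α η : ℝ) : ℂ)) - 1) -
        Complex.exp (Complex.I * ((x * η : ℝ) : ℂ)) *
          (Complex.I * ((theta c R α η : ℝ) : ℂ))) := by
    intro η
    have h := (expTail_hasSum (Complex.I * ((theta c R α η : ℝ) : ℂ))).mul_left
      (Complex.exp (Complex.I * ((x * η : ℝ) : ℂ)))
    have e1 : (fun j : ℕ => Complex.exp (Complex.I * ((x * η : ℝ) : ℂ)) *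
        ((Complex.I * ((theta c R α η : ℝ) : ℂ)) ^ (j+2) / ((j+2).factorial : ℂ)))
        = fun j : ℕ => (1 / ((j+2).factorial : ℂ)) *
        (Complex.exp (Complex.I * ((x * η : ℝ) : ℂ)) *
          (Complex.I * ((theta c R α η : ℝ) : ℂ)) ^ (j+2)) := by
      funext j; ring
    rw [e1] at h
    rw [← mul_sub]
    exact h
  have hFcont : ∀ j : ℕ, Continuous fun η : ℝ => (1 / ((j+2).factorial : ℂ)) *
      (Complex.exp (Complex.I * ((x * η : ℝ) : ℂ)) *
        (Complex.I * ((theta c R α η : ℝ) : ℂ)) ^ (j+2)) := by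
    intro j; fun_prop
  have hFint : ∀ j : ℕ, IntegrableOn (fun η : ℝ => (1 / ((j+2).factorial : ℂ)) *
      (Complex.exp (Complex.I * ((x * η : ℝ) : ℂ)) *
        (Complex.I * ((theta c R α η : ℝ) : ℂ)) ^ (j+2))) (Icc R (R+1)) :=
    fun j => (hFcont j).integrableOn_Icc
  have hFbound : ∀ j : ℕ, ∀ η ∈ Icc R (R+1), ‖(1 / ((j+2).factorial : ℂ)) *
      (Complex.exp (Complex.I * ((x * η : ℝ) : ℂ)) *
        (Complex.I * ((theta c R α η : ℝ) : ℂ)) ^ (j+2))‖ ≤ (2 * c ^ α) ^ (j+2) := by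
    intro j η hη
    rw [norm_mul, norm_mul, norm_pow]
    have h1 : ‖Complex.exp (Complex.I * ((x * η : ℝ) : ℂ))‖ = 1 := by
      rw [mul_comm, Complex.norm_exp_ofReal_mul_I]
    have h2 : ‖Complex.I * ((theta c R α η : ℝ) : ℂ)‖ = |theta c R α η| := by
      rw [norm_mul, Complex.norm_I, one_mul, Complex.norm_real, Real.norm_eq_abs]
    have h3 : ‖(1 / ((j+2).factorial : ℂ))‖ ≤ 1 := by
      have he : ‖(1 / ((j+2).factorial : ℂ))‖ = 1 / (((j+2).factorial : ℕ) : ℝ) := by simp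
      rw [he, div_le_one (by positivity)]
      exact_mod_cast Nat.one_le_iff_ne_zero.2 (Nat.factorial_ne_zero _)
    have hinner : ‖Complex.exp (Complex.I * ((x * η : ℝ) : ℂ))‖ *
        ‖Complex.I * ((theta c R α η : ℝ) : ℂ)‖ ^ (j+2) ≤ (2 * c ^ α) ^ (j+2) := by
      rw [h1, h2, one_mul]
      exact pow_le_pow_left₀ (abs_nonneg _) (habs η hη) _
    calc ‖(1 / ((j+2).factorial : ℂ))‖ * (‖Complex.exp (Complex.I * ((x * η : ℝ) : ℂ))‖ *
          ‖Complex.I * ((theta c R α η : ℝ) : ℂ)‖ ^ (j+2))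
        ≤ 1 * (2 * c ^ α) ^ (j+2) :=
          mul_le_mul h3 hinner (by positivity) zero_le_one
      _ = (2 * c ^ α) ^ (j+2) := by ring
  have hsumgeo : Summable fun j : ℕ => (2 * c ^ α) ^ (j+2) := by
    have h := (summable_geometric_of_lt_one (by positivity : (0:ℝ) ≤ 2 * c ^ α)
      (by linarith : 2 * c ^ α < 1)).mul_left ((2 * c ^ α) ^ 2)
    have e : (fun j : ℕ => (2 * c ^ α) ^ 2 * (2 * c ^ α) ^ j)
        = fun j : ℕ => (2 * c ^ α) ^ (j+2) := by
      funext j; ring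
    rwa [e] at h
  have hsum : Summable fun j : ℕ => ∫ η in Icc R (R+1), ‖(1 / ((j+2).factorial : ℂ)) *
      (Complex.exp (Complex.I * ((x * η : ℝ) : ℂ)) *
        (Complex.I * ((theta c R α η : ℝ) : ℂ)) ^ (j+2))‖ := by
    apply Summable.of_nonneg_of_le
      (fun j => integral_nonneg fun η => norm_nonneg _) _ hsumgeo
    intro j
    have hconst : (∫ _η in Icc R (R+1), (2 * c ^ α) ^ (j+2)) = (2 * c ^ α) ^ (j+2) := by
      simp [Real.volume_Icc]
    rw [← hconst]
    exact setIntegral_mono_on ((hFcont j).norm.integrableOn_Icc)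
      (integrableOn_const (by rw [Real.volume_Icc]; exact ENNReal.ofReal_ne_top))
      measurableSet_Icc (hFbound j)
  have hswap := MeasureTheory.integral_tsum_of_summable_integral_norm hFint hsum
  have hEzint : IntegrableOn (fun η : ℝ => Complex.exp (Complex.I * ((x * η : ℝ) : ℂ)) *
      (Complex.I * ((theta c R α η : ℝ) : ℂ))) (Icc R (R+1)) := by
    apply Continuous.integrableOn_Icc; fun_prop
  have hEe1int : IntegrableOn (fun η : ℝ => Complex.exp (Complex.I * ((x * η : ℝ) : ℂ)) *
      (Complex.exp (Complex.I * ((theta c R α η : ℝ) : ℂ)) - 1)) (Icc R (R+1)) := by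
    apply Continuous.integrableOn_Icc; fun_prop
  have hdecomp : (∫ η in Icc R (R+1), Complex.exp (Complex.I * ((x * η : ℝ) : ℂ)) *
        (Complex.exp (Complex.I * ((theta c R α η : ℝ) : ℂ)) - 1))
      = (∫ η in Icc R (R+1), Complex.exp (Complex.I * ((x * η : ℝ) : ℂ)) *
          (Complex.I * ((theta c R α η : ℝ) : ℂ)))
        + ∑' j : ℕ, (1 / ((j+2).factorial : ℂ)) *
            ∫ ξ in Icc R (R+1), Complex.exp (Complex.I * ((x * ξ : ℝ) : ℂ)) *
              (Complex.I * ((theta c R α ξ : ℝ) : ℂ)) ^ (j+2) := by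
    have htail : (∑' j : ℕ, ∫ η in Icc R (R+1), (1 / ((j+2).factorial : ℂ)) *
        (Complex.exp (Complex.I * ((x * η : ℝ) : ℂ)) *
          (Complex.I * ((theta c R α η : ℝ) : ℂ)) ^ (j+2)))
        = ∑' j : ℕ, (1 / ((j+2).factorial : ℂ)) *
            ∫ ξ in Icc R (R+1), Complex.exp (Complex.I * ((x * ξ : ℝ) : ℂ)) *
              (Complex.I * ((theta c R α ξ : ℝ) : ℂ)) ^ (j+2) := by
      refine tsum_congr fun j => ?_
      exact integral_const_mul _ _
    rw [← htail, hswap]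
    have h1 : (∫ η in Icc R (R+1), ∑' j : ℕ, (1 / ((j+2).factorial : ℂ)) *
        (Complex.exp (Complex.I * ((x * η : ℝ) : ℂ)) *
          (Complex.I * ((theta c R α η : ℝ) : ℂ)) ^ (j+2)))
        = (∫ η in Icc R (R+1), Complex.exp (Complex.I * ((x * η : ℝ) : ℂ)) *
            (Complex.exp (Complex.I * ((theta c R α η : ℝ) : ℂ)) - 1))
          - ∫ η in Icc R (R+1), Complex.exp (Complex.I * ((x * η : ℝ) : ℂ)) *
            (Complex.I * ((theta c R α η : ℝ) : ℂ)) := by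
      rw [← integral_sub hEe1int hEzint]
      exact setIntegral_congr_fun measurableSet_Icc fun η _ => (hpt η).tsum_eq
    rw [h1]
    ring
  rw [hsplit, hdecomp, norm_mul]
  have hπ : (0:ℝ) < π := Real.pi_pos
  have hnormk : ‖(1 / (2 * (π:ℂ)))‖ = 1 / (2 * π) := by
    rw [norm_div, norm_one, norm_mul]
    simp [Complex.norm_real, abs_of_pos hπ]
  rw [hnormk]
  have hAS : c ^ α / 4 ≤ ‖(∫ η in Icc R (R+1), Complex.exp (Complex.I * ((x * η : ℝ) : ℂ)) *
          (Complex.I * ((theta c R α η : ℝ) : ℂ)))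
        + ∑' j : ℕ, (1 / ((j+2).factorial : ℂ)) *
            ∫ ξ in Icc R (R+1), Complex.exp (Complex.I * ((x * ξ : ℝ) : ℂ)) *
              (Complex.I * ((theta c R α ξ : ℝ) : ℂ)) ^ (j+2)‖ := by
    set A := ∫ η in Icc R (R+1), Complex.exp (Complex.I * ((x * η : ℝ) : ℂ)) *
          (Complex.I * ((theta c R α η : ℝ) : ℂ)) with hA
    set S := ∑' j : ℕ, (1 / ((j+2).factorial : ℂ)) *
            ∫ ξ in Icc R (R+1), Complex.exp (Complex.I * ((x * ξ : ℝ) : ℂ)) *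
              (Complex.I * ((theta c R α ξ : ℝ) : ℂ)) ^ (j+2) with hS
    have h1 : ‖A‖ ≤ ‖A + S‖ + ‖S‖ := by
      calc ‖A‖ = ‖(A + S) - S‖ := by ring_nf
        _ ≤ ‖A + S‖ + ‖S‖ := norm_sub_le _ _
    have h2 : c ^ α / 2 ≤ ‖A‖ := part1
    have h3 : ‖S‖ ≤ c ^ α / 4 := part2
    linarith
  have hfin := mul_le_mul_of_nonneg_left hAS (by positivity : (0:ℝ) ≤ 1/(2*π))
  calc c ^ α / (8 * π) = (1 / (2 * π)) * (c ^ α / 4) := by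
        rw [div_mul_div_comm, one_mul]
        congr 1
        ring
    _ ≤ _ := hfin
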